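/- Let X be an irreducible, aperiodic, stationary first-order Markov chain on the finite alphabet 𝒳 with stationary distribution μ, g: 𝒳 → 𝒴, Y_n := g(X_n), and let Y^(k) be the stationary k-th order Markov chain on 𝒴 with transition matrix Q_{i_1,...,i_k→j} = p_{Y_{k+1}|Y_1^k}(j|i_1,...,i_k). Define the μ-lifting X' as the stationary k-th order Markov chain on 𝒳 with transition matrix P̂_{i_1,...,i_k→j} = ( μ_j / Σ_{ℓ ∈ g^{-1}(g(j))} μ_ℓ ) · Q_{g(i_1),...,g(i_k)→g(j)}. Then, viewing X as the k-th order Markov chain with transition matrix P̃_{i_1,...,i_k→j} = P_{i_k→j}, the Kullback-Leibler divergence rate between X and X' equals the predictability cost: D̄(X‖X') = Δ_P^k(X, g). -/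

import Mathlib

open Filter

section MarkovAggregation

variable {𝒳 : Type*} {𝒴 : Type*} [Fintype 𝒳] [DecidableEq 𝒳] [Fintype 𝒴] [DecidableEq 𝒴]

/-- Shannon entropy of a probability mass function on a finite set. -/
noncomputable def entPMF {α : Type*} [Fintype α] (p : α → ℝ) : ℝ :=
  ∑ a : α, Real.negMulLog (p a)

/-- Marginal of a joint pmf on the first component. -/
noncomputable def margFst {α β : Type*} [Fintype β] (p : α × β → ℝ) : α → ℝ :=
  fun a => ∑ b : β, p (a, b)

/-- Marginal of a joint pmf on the second component. -/
noncomputable def margSnd {α β : Type*} [Fintype α] (p : α × β → ℝ) : β → ℝ :=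
  fun b => ∑ a : α, p (a, b)

/-- Conditional Shannon entropy H(A | B) of a joint pmf `p` of the pair (A, B). -/
noncomputable def condEntPMF {α β : Type*} [Fintype α] [Fintype β] (p : α × β → ℝ) : ℝ :=
  entPMF p - entPMF (margSnd p)

/-- Mutual information I(A ; B) of a joint pmf `p` of the pair (A, B). -/
noncomputable def mutInfPMF {α β : Type*} [Fintype α] [Fintype β] (p : α × β → ℝ) : ℝ :=
  entPMF (margFst p) + entPMF (margSnd p) - entPMF p

/-- Probability that a first-order Markov chain with initial distribution `π` and transition
matrix `P` emits the path (x_0, ..., x_{n-1}). -/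
noncomputable def xPath (π : 𝒳 → ℝ) (P : Matrix 𝒳 𝒳 ℝ) (n : ℕ) (x : Fin n → 𝒳) : ℝ :=
  (if h : 0 < n then π (x ⟨0, h⟩) else 1) *
    ∏ i : Fin n, if h : i.val + 1 < n then P (x i) (x ⟨i.val + 1, h⟩) else 1

/-- Probability that the projection Y_n = g(X_n) emits the path (y_0, ..., y_{n-1}). -/
noncomputable def yPath (π : 𝒳 → ℝ) (P : Matrix 𝒳 𝒳 ℝ) (g : 𝒳 → 𝒴) (n : ℕ)
    (y : Fin n → 𝒴) : ℝ :=
  ∑ x : Fin n → 𝒳, if ∀ i, g (x i) = y i then xPath π P n x else 0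

/-- Joint probability of (X_1, (Y_2, ..., Y_{m+1})). -/
noncomputable def xyPath (π : 𝒳 → ℝ) (P : Matrix 𝒳 𝒳 ℝ) (g : 𝒳 → 𝒴) (m : ℕ)
    (x₀ : 𝒳) (y : Fin m → 𝒴) : ℝ :=
  ∑ x : Fin (m + 1) → 𝒳,
    if x 0 = x₀ ∧ ∀ i : Fin m, g (x i.succ) = y i then xPath π P (m + 1) x else 0

/-- A matrix is primitive iff some power (and all larger powers) of it is entrywise positive;
for a stochastic matrix this is equivalent to being irreducible and aperiodic. -/
def PrimitiveMatrix (P : Matrix 𝒳 𝒳 ℝ) : Prop :=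
  ∃ N : ℕ, ∀ n : ℕ, N ≤ n → ∀ i j : 𝒳, 0 < (P ^ n) i j

/-- A Markov chain with transition matrix `P` is `k`-lumpable w.r.t. `g` iff for every initial
distribution `π` the projected process is a `k`-th order Markov chain whose transition matrix `Q`
does not depend on `π`. -/
def Lumpable (P : Matrix 𝒳 𝒳 ℝ) (g : 𝒳 → 𝒴) (k : ℕ) : Prop :=
  ∃ Q : (Fin k → 𝒴) → 𝒴 → ℝ,
    ∀ π : 𝒳 → ℝ, (∀ x, 0 ≤ π x) → (∑ x, π x = 1) →
      ∀ n : ℕ, ∀ hn : k ≤ n, ∀ y : Fin n → 𝒴, ∀ j : 𝒴,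
        yPath π P g (n + 1) (Fin.snoc y j) =
          yPath π P g n y *
            Q (fun i : Fin k => y ⟨n - k + i.val, by have := i.isLt; omega⟩) j

/-- The lumpability cost Δ_L^{k+1}(X, g) = H(Y_{k+2} | Y_1^{k+1}) - H(Y_{k+2} | Y_2^{k+1}, X_1),
for the stationary chain with invariant distribution `μ` and transition matrix `P`. -/
noncomputable def lumpCost (μ : 𝒳 → ℝ) (P : Matrix 𝒳 𝒳 ℝ) (g : 𝒳 → 𝒴) (k : ℕ) : ℝ :=
  condEntPMF (fun q : 𝒴 × (Fin (k + 1) → 𝒴) => yPath μ P g (k + 2) (Fin.snoc q.2 q.1)) -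
  condEntPMF (fun q : 𝒴 × (𝒳 × (Fin k → 𝒴)) =>
    xyPath μ P g (k + 1) q.2.1 (Fin.snoc q.2.2 q.1))

/-- The predictability cost Δ_P^{k+1}(X, g) = I(X_2 ; X_1) - I(Y_{k+2} ; Y_1^{k+1}),
for the stationary chain with invariant distribution `μ` and transition matrix `P`. -/
noncomputable def predCost (μ : 𝒳 → ℝ) (P : Matrix 𝒳 𝒳 ℝ) (g : 𝒳 → 𝒴) (k : ℕ) : ℝ :=
  mutInfPMF (fun q : 𝒳 × 𝒳 => μ q.1 * P q.1 q.2) -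
  mutInfPMF (fun q : 𝒴 × (Fin (k + 1) → 𝒴) => yPath μ P g (k + 2) (Fin.snoc q.2 q.1))

/-- Path probabilities of a stationary `K`-th order Markov chain on `𝒴` with stationary
`K`-dimensional distribution `ρ` and transition matrix `R`. -/
noncomputable def mkvPath {K : ℕ} (ρ : (Fin K → 𝒴) → ℝ) (R : (Fin K → 𝒴) → 𝒴 → ℝ)
    (n : ℕ) (y : Fin n → 𝒴) : ℝ :=
  if h : K ≤ n then
    ρ (fun i => y ⟨i.val, lt_of_lt_of_le i.isLt h⟩) *
      ∏ m : Fin n, if hm : K ≤ m.val then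
        R (fun i => y ⟨m.val - K + i.val, by have h1 := i.isLt; have h2 := m.isLt; omega⟩) (y m)
      else 1
  else
    ∑ z : Fin K → 𝒴, if ∀ i : Fin n, z ⟨i.val, by have := i.isLt; omega⟩ = y i then ρ z else 0

end MarkovAggregation

/-! Both sides are averages over the stationary law of (X_1, …, X_{k+2}). The log-ratio in the
divergence splits as `log P - log μ_j` plus `log μ(g⁻¹(g j)) - log p(Y_1^{k+2}) + log p(Y_1^{k+1})`.
By stationarity the first part averages to I(X_2; X_1); pushed forward along `g`, the second
part averages to -I(Y_{k+2}; Y_1^{k+1}). Wherever the weight is positive, every quantity inside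
the logarithms is positive, so the splitting of the logarithm is legitimate. -/

open Finset Real

section PathProbabilities

variable {𝒳 𝒴 : Type*}

lemma sum_fun_fin_succ_eq_sum_snoc {α : Type*} [Fintype α] {n : ℕ} (F : (Fin (n + 1) → α) → ℝ) :
    ∑ z, F z = ∑ x : Fin n → α, ∑ a, F (Fin.snoc x a) := by
  rw [← (Fin.snocEquiv fun _ => α).sum_comp, Fintype.sum_prod_type, sum_comm]
  rfl

lemma xPath_succ (μ : 𝒳 → ℝ) (P : Matrix 𝒳 𝒳 ℝ) (n : ℕ) (x : Fin (n + 1) → 𝒳) :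
    xPath μ P (n + 1) x = μ (x 0) * ∏ i : Fin n, P (x i.castSucc) (x i.succ) := by
  simp only [xPath, Fin.prod_univ_castSucc, Fin.val_last, lt_self_iff_false, dite_false, mul_one]
  simp [Fin.succ]

lemma xPath_snoc (μ : 𝒳 → ℝ) (P : Matrix 𝒳 𝒳 ℝ) (n : ℕ) (x : Fin (n + 1) → 𝒳) (j : 𝒳) :
    xPath μ P (n + 2) (Fin.snoc x j) = xPath μ P (n + 1) x * P (x (Fin.last n)) j := by
  rw [xPath_succ, xPath_succ, Fin.prod_univ_castSucc]
  simp only [← Fin.castSucc_zero, Fin.succ_castSucc, Fin.snoc_castSucc, Fin.succ_last,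
    Fin.snoc_last, mul_assoc]

lemma xPath_nonneg {μ : 𝒳 → ℝ} {P : Matrix 𝒳 𝒳 ℝ} (hμ0 : ∀ x, 0 ≤ μ x) (hP0 : ∀ i j, 0 ≤ P i j)
    (n : ℕ) (x : Fin n → 𝒳) : 0 ≤ xPath μ P n x := by
  unfold xPath
  apply mul_nonneg
  · split <;> simp [hμ0]
  · exact prod_nonneg fun i _ => by split <;> simp [hP0]

variable [Fintype 𝒳]

lemma sum_xPath_mul_last {μ : 𝒳 → ℝ} {P : Matrix 𝒳 𝒳 ℝ} (hμ : ∀ j, ∑ i, μ i * P i j = μ j)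
    (n : ℕ) (f : 𝒳 → ℝ) :
    ∑ x : Fin (n + 1) → 𝒳, xPath μ P (n + 1) x * f (x (Fin.last n)) = ∑ i, μ i * f i := by
  induction n generalizing f with
  | zero =>
    simp only [xPath_succ, univ_eq_empty, prod_empty, mul_one]
    exact (Equiv.funUnique (Fin 1) 𝒳).sum_comp (fun i => μ i * f i)
  | succ n ih =>
    calc ∑ x : Fin (n + 2) → 𝒳, xPath μ P (n + 2) x * f (x (Fin.last (n + 1)))
        = ∑ x : Fin (n + 1) → 𝒳, xPath μ P (n + 1) x * ∑ j, P (x (Fin.last n)) j * f j := by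
          simp only [sum_fun_fin_succ_eq_sum_snoc, xPath_snoc, Fin.snoc_last, mul_sum, mul_assoc]
      _ = ∑ i, μ i * ∑ j, P i j * f j := ih fun i => ∑ j, P i j * f j
      _ = ∑ j, μ j * f j := by
          simp only [mul_sum, ← mul_assoc]
          rw [sum_comm]
          simp only [← sum_mul, hμ]

lemma sum_xPath_mul_transition {μ : 𝒳 → ℝ} {P : Matrix 𝒳 𝒳 ℝ}
    (hμ : ∀ j, ∑ i, μ i * P i j = μ j) (n : ℕ) (G : 𝒳 → 𝒳 → ℝ) :
    ∑ x : Fin (n + 1) → 𝒳, ∑ j, xPath μ P (n + 1) x * P (x (Fin.last n)) j * G (x (Fin.last n)) j =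
      ∑ i, ∑ j, μ i * P i j * G i j := by
  simp only [mul_assoc, ← mul_sum]
  exact sum_xPath_mul_last hμ n fun i => ∑ j, P i j * G i j

lemma xPath_mul_transition_le {μ : 𝒳 → ℝ} {P : Matrix 𝒳 𝒳 ℝ} (hμ0 : ∀ x, 0 ≤ μ x)
    (hP0 : ∀ i j, 0 ≤ P i j) (hμ : ∀ j, ∑ i, μ i * P i j = μ j) (n : ℕ) (x : Fin (n + 1) → 𝒳)
    (j : 𝒳) : xPath μ P (n + 1) x * P (x (Fin.last n)) j ≤ μ j := by
  calc xPath μ P (n + 1) x * P (x (Fin.last n)) j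
      ≤ ∑ x : Fin (n + 1) → 𝒳, xPath μ P (n + 1) x * P (x (Fin.last n)) j :=
        single_le_sum (f := fun x => xPath μ P (n + 1) x * P (x (Fin.last n)) j)
          (fun x _ => mul_nonneg (xPath_nonneg hμ0 hP0 _ x) (hP0 _ _)) (mem_univ x)
    _ = μ j := (sum_xPath_mul_last hμ n (P · j)).trans (hμ j)

variable [DecidableEq 𝒴]

def lumpedDist (μ : 𝒳 → ℝ) (g : 𝒳 → 𝒴) (b : 𝒴) : ℝ :=
  ∑ ℓ, if g ℓ = b then μ ℓ else 0

lemma le_lumpedDist {μ : 𝒳 → ℝ} (hμ0 : ∀ x, 0 ≤ μ x) (g : 𝒳 → 𝒴) (j : 𝒳) :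
    μ j ≤ lumpedDist μ g (g j) := by
  simpa [lumpedDist] using single_le_sum (f := fun ℓ => if g ℓ = g j then μ ℓ else 0)
    (fun ℓ _ => by split <;> simp [hμ0]) (mem_univ j)

lemma xPath_le_yPath {μ : 𝒳 → ℝ} {P : Matrix 𝒳 𝒳 ℝ} (hμ0 : ∀ x, 0 ≤ μ x) (hP0 : ∀ i j, 0 ≤ P i j)
    (g : 𝒳 → 𝒴) (n : ℕ) (x : Fin n → 𝒳) : xPath μ P n x ≤ yPath μ P g n (g ∘ x) := by
  have h := single_le_sum (s := univ) (a := x)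
    (f := fun z => if ∀ i, g (z i) = (g ∘ x) i then xPath μ P n z else 0)
    (fun z _ => by split <;> simp [xPath_nonneg hμ0 hP0]) (mem_univ x)
  simpa [yPath] using h

variable [Fintype 𝒴]

lemma sum_yPath_mul (μ : 𝒳 → ℝ) (P : Matrix 𝒳 𝒳 ℝ) (g : 𝒳 → 𝒴) (n : ℕ) (F : (Fin n → 𝒴) → ℝ) :
    ∑ y, yPath μ P g n y * F y = ∑ x, xPath μ P n x * F (g ∘ x) := by
  simp only [yPath, sum_mul, ite_mul, zero_mul]
  rw [sum_comm]
  refine sum_congr rfl fun x _ => ?_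
  simp only [← Function.comp_apply (f := g), ← funext_iff, sum_ite_eq, mem_univ, if_true]

lemma sum_yPath_snoc_mul (μ : 𝒳 → ℝ) (P : Matrix 𝒳 𝒳 ℝ) (g : 𝒳 → 𝒴) (n : ℕ)
    (F : (Fin (n + 1) → 𝒴) → 𝒴 → ℝ) :
    ∑ y, ∑ b, yPath μ P g (n + 2) (Fin.snoc y b) * F y b =
      ∑ x : Fin (n + 1) → 𝒳, ∑ j, xPath μ P (n + 1) x * P (x (Fin.last n)) j * F (g ∘ x) (g j) := by
  calc ∑ y, ∑ b, yPath μ P g (n + 2) (Fin.snoc y b) * F y b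
      = ∑ y, yPath μ P g (n + 2) y * F (Fin.init y) (y (Fin.last _)) := by
        simp only [sum_fun_fin_succ_eq_sum_snoc (n := n + 1), Fin.init_snoc, Fin.snoc_last]
    _ = ∑ x, xPath μ P (n + 2) x * F (Fin.init (g ∘ x)) ((g ∘ x) (Fin.last _)) :=
        sum_yPath_mul μ P g _ _
    _ = _ := by
        simp only [sum_fun_fin_succ_eq_sum_snoc (n := n + 1), xPath_snoc, Fin.comp_snoc,
          Fin.init_snoc, Fin.snoc_last]

lemma sum_yPath_snoc_right {μ : 𝒳 → ℝ} {P : Matrix 𝒳 𝒳 ℝ} (hP1 : ∀ i, ∑ j, P i j = 1)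
    (g : 𝒳 → 𝒴) (n : ℕ) (y₀ : Fin (n + 1) → 𝒴) :
    ∑ b, yPath μ P g (n + 2) (Fin.snoc y₀ b) = yPath μ P g (n + 1) y₀ := by
  calc ∑ b, yPath μ P g (n + 2) (Fin.snoc y₀ b)
      = ∑ y, ∑ b, yPath μ P g (n + 2) (Fin.snoc y b) * if y = y₀ then 1 else 0 := by
        simp
    _ = ∑ x, xPath μ P (n + 1) x * if g ∘ x = y₀ then 1 else 0 := by
        rw [sum_yPath_snoc_mul]
        simp only [mul_right_comm _ (P _ _), ← mul_sum, hP1, mul_one]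
    _ = yPath μ P g (n + 1) y₀ := by
        rw [← sum_yPath_mul μ P g (n + 1) fun y => if y = y₀ then 1 else 0]
        simp

lemma sum_yPath_snoc_left {μ : 𝒳 → ℝ} {P : Matrix 𝒳 𝒳 ℝ} (hμ : ∀ j, ∑ i, μ i * P i j = μ j)
    (g : 𝒳 → 𝒴) (n : ℕ) (b₀ : 𝒴) :
    ∑ y : Fin (n + 1) → 𝒴, yPath μ P g (n + 2) (Fin.snoc y b₀) = lumpedDist μ g b₀ := by
  calc ∑ y : Fin (n + 1) → 𝒴, yPath μ P g (n + 2) (Fin.snoc y b₀)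
      = ∑ y, ∑ b, yPath μ P g (n + 2) (Fin.snoc y b) * if b = b₀ then 1 else 0 := by
        simp
    _ = ∑ i, ∑ j, μ i * P i j * if g j = b₀ then 1 else 0 := by
        rw [sum_yPath_snoc_mul]
        exact sum_xPath_mul_transition hμ n fun _ j => if g j = b₀ then 1 else 0
    _ = _ := by
        rw [sum_comm]
        refine sum_congr rfl fun j _ => ?_
        rw [← sum_mul, hμ, mul_ite, mul_one, mul_zero]

end PathProbabilities

section Information

variable {α β : Type*} [Fintype α] [Fintype β]

lemma mutInfPMF_eq_sum_mul_log (p : α × β → ℝ) :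
    mutInfPMF p = ∑ q, p q * (log (p q) - log (margFst p q.1) - log (margSnd p q.2)) := by
  have hFst : entPMF (margFst p) = -∑ q, p q * log (margFst p q.1) := by
    simp only [entPMF, negMulLog, Fintype.sum_prod_type, neg_mul, sum_neg_distrib, ← sum_mul]
    rfl
  have hSnd : entPMF (margSnd p) = -∑ q, p q * log (margSnd p q.2) := by
    rw [Fintype.sum_prod_type, sum_comm]
    simp only [entPMF, negMulLog, neg_mul, sum_neg_distrib, ← sum_mul]
    rfl
  rw [mutInfPMF, hFst, hSnd]
  simp only [entPMF, negMulLog, mul_sub, sum_sub_distrib, neg_mul, sum_neg_distrib]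
  ring

end Information

section Lifting

variable {𝒳 𝒴 : Type*} [Fintype 𝒳] [DecidableEq 𝒴]

noncomputable def muLifting (μ : 𝒳 → ℝ) (P : Matrix 𝒳 𝒳 ℝ) (g : 𝒳 → 𝒴) (n : ℕ)
    (x : Fin (n + 1) → 𝒳) (j : 𝒳) : ℝ :=
  μ j / lumpedDist μ g (g j) *
    (yPath μ P g (n + 2) (Fin.snoc (g ∘ x) (g j)) / yPath μ P g (n + 1) (g ∘ x))

lemma mul_log_div_muLifting {μ : 𝒳 → ℝ} {P : Matrix 𝒳 𝒳 ℝ} (hμ0 : ∀ x, 0 ≤ μ x)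
    (hP0 : ∀ i j, 0 ≤ P i j) (hμ : ∀ j, ∑ i, μ i * P i j = μ j) (g : 𝒳 → 𝒴) (n : ℕ)
    (x : Fin (n + 1) → 𝒳) (j : 𝒳) :
    xPath μ P (n + 1) x * P (x (Fin.last n)) j *
        log (P (x (Fin.last n)) j / muLifting μ P g n x j) =
      xPath μ P (n + 1) x * P (x (Fin.last n)) j *
        ((log (P (x (Fin.last n)) j) - log (μ j)) -
          (log (yPath μ P g (n + 2) (Fin.snoc (g ∘ x) (g j))) - log (lumpedDist μ g (g j)) -
            log (yPath μ P g (n + 1) (g ∘ x)))) := by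
  rcases (mul_nonneg (xPath_nonneg hμ0 hP0 _ x) (hP0 (x (Fin.last n)) j)).eq_or_lt with hw | hw
  · simp [← hw]
  have hP : 0 < P (x (Fin.last n)) j := pos_of_mul_pos_right hw (xPath_nonneg hμ0 hP0 _ x)
  have hx : 0 < xPath μ P (n + 1) x := pos_of_mul_pos_left hw (hP0 _ _)
  have hμj : 0 < μ j := hw.trans_le (xPath_mul_transition_le hμ0 hP0 hμ n x j)
  have hν : 0 < lumpedDist μ g (g j) := hμj.trans_le (le_lumpedDist hμ0 g j)
  have hy₁ : 0 < yPath μ P g (n + 1) (g ∘ x) := hx.trans_le (xPath_le_yPath hμ0 hP0 g _ x)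
  have hy₂ : 0 < yPath μ P g (n + 2) (Fin.snoc (g ∘ x) (g j)) := by
    have h := xPath_le_yPath hμ0 hP0 g (n + 2) (Fin.snoc x j)
    rw [xPath_snoc, Fin.comp_snoc] at h
    exact hw.trans_le h
  rw [muLifting, log_div hP.ne' (by positivity), log_mul (by positivity) (by positivity),
    log_div hμj.ne' hν.ne', log_div hy₂.ne' hy₁.ne']
  ring

variable [Fintype 𝒴]

lemma mutInfPMF_stationary_pair {μ : 𝒳 → ℝ} {P : Matrix 𝒳 𝒳 ℝ} (hμ0 : ∀ x, 0 ≤ μ x)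
    (hP0 : ∀ i j, 0 ≤ P i j) (hP1 : ∀ i, ∑ j, P i j = 1) (hμ : ∀ j, ∑ i, μ i * P i j = μ j) :
    mutInfPMF (fun q : 𝒳 × 𝒳 => μ q.1 * P q.1 q.2) =
      ∑ i, ∑ j, μ i * P i j * (log (P i j) - log (μ j)) := by
  have hFst : margFst (fun q : 𝒳 × 𝒳 => μ q.1 * P q.1 q.2) = μ :=
    funext fun i => by simp only [margFst, ← mul_sum, hP1, mul_one]
  have hSnd : margSnd (fun q : 𝒳 × 𝒳 => μ q.1 * P q.1 q.2) = μ := funext hμ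
  rw [mutInfPMF_eq_sum_mul_log, hFst, hSnd, Fintype.sum_prod_type]
  refine sum_congr rfl fun i _ => sum_congr rfl fun j _ => ?_
  rcases (mul_nonneg (hμ0 i) (hP0 i j)).eq_or_lt with h | h
  · simp [← h]
  · rw [log_mul (left_ne_zero_of_mul h.ne') (right_ne_zero_of_mul h.ne')]
    ring

lemma mutInfPMF_yPath_snoc {μ : 𝒳 → ℝ} {P : Matrix 𝒳 𝒳 ℝ} (hP1 : ∀ i, ∑ j, P i j = 1)
    (hμ : ∀ j, ∑ i, μ i * P i j = μ j) (g : 𝒳 → 𝒴) (n : ℕ) :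
    mutInfPMF (fun q : 𝒴 × (Fin (n + 1) → 𝒴) => yPath μ P g (n + 2) (Fin.snoc q.2 q.1)) =
      ∑ y, ∑ b, yPath μ P g (n + 2) (Fin.snoc y b) *
        (log (yPath μ P g (n + 2) (Fin.snoc y b)) - log (lumpedDist μ g b) -
          log (yPath μ P g (n + 1) y)) := by
  rw [mutInfPMF_eq_sum_mul_log, Fintype.sum_prod_type, sum_comm]
  simp only [margFst, margSnd, sum_yPath_snoc_left hμ, sum_yPath_snoc_right hP1]

end Lifting

theorem stmt15_general {𝒳 𝒴 : Type*} [Fintype 𝒳] [Fintype 𝒴] [DecidableEq 𝒴]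
    (P : Matrix 𝒳 𝒳 ℝ) (hP0 : ∀ i j, 0 ≤ P i j) (hP1 : ∀ i, ∑ j : 𝒳, P i j = 1)
    (μ : 𝒳 → ℝ) (hμ0 : ∀ x, 0 ≤ μ x)
    (hμ2 : ∀ j, ∑ i : 𝒳, μ i * P i j = μ j) (g : 𝒳 → 𝒴) (k : ℕ) :
    (∑ x : Fin (k + 1) → 𝒳, ∑ j : 𝒳,
      xPath μ P (k + 1) x * P (x (Fin.last k)) j *
        Real.log (P (x (Fin.last k)) j /
          ((μ j / ∑ ℓ : 𝒳, if g ℓ = g j then μ ℓ else 0) *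
            (yPath μ P g (k + 2) (Fin.snoc (fun i => g (x i)) (g j)) /
              yPath μ P g (k + 1) (fun i => g (x i))))))
      = predCost μ P g k := by
  rw [predCost, mutInfPMF_stationary_pair hμ0 hP0 hP1 hμ2, mutInfPMF_yPath_snoc hP1 hμ2,
    ← sum_xPath_mul_transition hμ2 k fun i j => log (P i j) - log (μ j),
    sum_yPath_snoc_mul μ P g k fun y b => log (yPath μ P g (k + 2) (Fin.snoc y b)) -
      log (lumpedDist μ g b) - log (yPath μ P g (k + 1) y), ← sum_sub_distrib]
  refine sum_congr rfl fun x _ => ?_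
  rw [← sum_sub_distrib]
  refine sum_congr rfl fun j _ => ?_
  rw [← mul_sub]
  exact mul_log_div_muLifting hμ0 hP0 hμ2 g k x j

/-- let X be an irreducible, aperiodic, stationary first-order Markov chain
with transition matrix P and invariant distribution μ, and let Y^{(k+1)} be the stationary
(k+1)-th order Markov approximation of the projection Y, with transition matrix
Q_{i_1..i_{k+1}→j} = p_{Y_{k+2}|Y_1^{k+1}}(j | i_1..i_{k+1}).  Define the μ-lifting X' of
Y^{(k+1)} as the stationary (k+1)-th order chain on 𝒳 with transition matrix
P̂_{i_1..i_{k+1}→j} = (μ_j / ∑_{ℓ ∈ g⁻¹(g(j))} μ_ℓ) Q_{g(i_1)..g(i_{k+1})→g(j)}.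
Viewing X as the (k+1)-th order chain with P̃_{i_1..i_{k+1}→j} = P_{i_{k+1}→j}, the KL divergence
rate between X and X' (given by the explicit formula for KLDR between (k+1)-th order chains)
equals the predictability cost: D̄(X‖X') = Δ_P^{k+1}(X, g). -/
theorem stmt15 {𝒳 𝒴 : Type*} [Fintype 𝒳] [DecidableEq 𝒳] [Fintype 𝒴] [DecidableEq 𝒴]
    (P : Matrix 𝒳 𝒳 ℝ) (hP0 : ∀ i j, 0 ≤ P i j) (hP1 : ∀ i, ∑ j : 𝒳, P i j = 1)
    (hprim : PrimitiveMatrix P)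
    (μ : 𝒳 → ℝ) (hμ0 : ∀ x, 0 ≤ μ x) (hμ1 : ∑ x : 𝒳, μ x = 1)
    (hμ2 : ∀ j, ∑ i : 𝒳, μ i * P i j = μ j) (g : 𝒳 → 𝒴) (k : ℕ) :
    (∑ x : Fin (k + 1) → 𝒳, ∑ j : 𝒳,
      xPath μ P (k + 1) x * P (x (Fin.last k)) j *
        Real.log (P (x (Fin.last k)) j /
          ((μ j / ∑ ℓ : 𝒳, if g ℓ = g j then μ ℓ else 0) *
            (yPath μ P g (k + 2) (Fin.snoc (fun i => g (x i)) (g j)) /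
              yPath μ P g (k + 1) (fun i => g (x i))))))
      = predCost μ P g k :=
  stmt15_general P hP0 hP1 μ hμ0 hμ2 g k
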